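/- arXiv:2501.03351 — 2 statements merged into one kernel-verified Lean document; each statement's English description precedes it below -/
import Mathlib

section
/- Let n ≥ 2 be an even integer and define the Plancherel density ν(λ) = (2/π)·|c(λ)|^{-2} for λ ∈ ℝ \ {0}. Then there exist constants C₁, C₂ > 0 such that C₁·(1+|λ|)^{n-1} ≤ ν(λ) ≤ C₂·(1+|λ|)^{n-1} for all λ ∈ ℝ \ {0}. -/
/-!
For `n = 2 (k + 1)` the Gamma factors of `c(λ)` have closed forms: the reflection formula gives
`|Γ(iλ)|² = π / (λ sinh πλ)`, and `Γ(iλ + k + 1) = Γ(iλ) ∏_{j ≤ k} (iλ + j)`. Hence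
`ν(λ) = K λ coth(πλ) ∏_{j=1}^{k} (λ² + j²)` for an explicit `K > 0`, with `λ coth(πλ) ≍ 1 + |λ|` and
`λ² + j² ≍ (1 + |λ|)²`.
-/

open Complex Real ComplexConjugate Finset Filter Asymptotics
open scoped Nat

namespace Complex

theorem norm_Gamma_I_mul_sq {t : ℝ} (ht : t ≠ 0) :
    ‖Gamma (I * t)‖ ^ 2 = π / (t * Real.sinh (π * t)) := by
  have hsinh : Real.sinh (π * t) ≠ 0 := Real.sinh_ne_zero.mpr (mul_ne_zero pi_ne_zero ht)
  have hreflect := Gamma_mul_Gamma_one_sub (I * t)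
  have hconj : Gamma (1 - I * t) = -(I * t) * conj (Gamma (I * t)) := by
    have hz : -(I * t) ≠ 0 := by simp [ht]
    rw [sub_eq_neg_add, Gamma_add_one _ hz, ← Gamma_conj]
    simp
  have hsin : sin (π * (I * t)) = Real.sinh (π * t) * I := by
    rw [show (π : ℂ) * (I * t) = ((π * t : ℝ) : ℂ) * I by push_cast; ring, sin_mul_I, ofReal_sinh]
  rw [hconj, hsin, ← mul_assoc, mul_comm (Gamma _), mul_assoc, mul_conj, normSq_eq_norm_sq,
    eq_div_iff (mul_ne_zero (ofReal_ne_zero.mpr hsinh) I_ne_zero)] at hreflect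
  rw [eq_div_iff (mul_ne_zero ht hsinh)]
  apply ofReal_injective
  push_cast at hreflect ⊢
  linear_combination hreflect + t * ‖Gamma (I * t)‖ ^ 2 * sinh (π * t) * I_sq

theorem Gamma_add_nat_eq_prod_mul {z : ℂ} (hz : ∀ m : ℕ, z ≠ -m) (k : ℕ) :
    Gamma (z + k) = (∏ j ∈ range k, (z + j)) * Gamma z := by
  induction k with
  | zero => simp
  | succ k ih =>
    have hzk : z + k ≠ 0 := fun h => hz k (eq_neg_of_add_eq_zero_left h)
    rw [Nat.cast_succ, ← add_assoc, Gamma_add_one _ hzk, ih, prod_range_succ]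
    ring

theorem norm_prod_I_mul_add_nat_sq (t : ℝ) (k : ℕ) :
    ‖∏ j ∈ range (k + 1), (I * t + j)‖ ^ 2 = t ^ 2 * ∏ j ∈ range k, (t ^ 2 + (j + 1) ^ 2) := by
  rw [norm_prod, ← prod_pow, prod_range_succ', mul_comm]
  congr 1
  · simp
  · refine prod_congr rfl fun j _ => ?_
    rw [Complex.sq_norm, normSq_apply]
    simp
    ring

end Complex

noncomputable def harishChandraC (n : ℕ) (l : ℝ) : ℂ :=
  (2 : ℂ) ^ ((n : ℂ) - 2 * I * l) * Gamma ((n : ℂ) / 2) * Gamma (2 * I * l) /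
    (Gamma (I * l + (n : ℂ) / 2) * Gamma (I * l))

noncomputable def plancherelDensity (n : ℕ) (l : ℝ) : ℝ :=
  2 / π * (‖harishChandraC n l‖ ^ 2)⁻¹

theorem norm_harishChandraC (k : ℕ) {t : ℝ} (ht : t ≠ 0) :
    ‖harishChandraC (2 * (k + 1)) t‖ = 4 ^ (k + 1) * k ! * ‖Gamma (I * (2 * t : ℝ))‖ /
      (‖∏ j ∈ range (k + 1), (I * t + j)‖ * ‖Gamma (I * t)‖ ^ 2) := by
  have hhalf : ((2 * (k + 1) : ℕ) : ℂ) / 2 = k + 1 := by push_cast; ring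
  have hpow : ‖(2 : ℂ) ^ (((2 * (k + 1) : ℕ) : ℂ) - 2 * I * t)‖ = 4 ^ (k + 1) := by
    have hre : (((2 * (k + 1) : ℕ) : ℂ) - 2 * I * t).re = (2 * (k + 1) : ℕ) := by simp
    have h := norm_cpow_eq_rpow_re_of_pos two_pos (((2 * (k + 1) : ℕ) : ℂ) - 2 * I * t)
    rw [ofReal_ofNat, hre, Real.rpow_natCast, pow_mul] at h
    rw [h]
    norm_num
  have hshift : Gamma (I * t + (k + 1 : ℕ)) = (∏ j ∈ range (k + 1), (I * t + j)) * Gamma (I * t) :=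
    Gamma_add_nat_eq_prod_mul (fun m h => by simpa [ht] using congrArg im h) (k + 1)
  rw [harishChandraC, hhalf, Complex.Gamma_nat_eq_factorial, ← Nat.cast_add_one, hshift]
  simp only [norm_div, norm_mul, hpow, Complex.norm_natCast]
  rw [show (2 : ℂ) * I * t = I * (2 * t : ℝ) by push_cast; ring]
  ring

theorem plancherelDensity_eq (k : ℕ) {t : ℝ} (ht : t ≠ 0) :
    plancherelDensity (2 * (k + 1)) t =
      8 / (16 ^ (k + 1) * (k ! : ℝ) ^ 2) * (t * Real.cosh (π * t) / Real.sinh (π * t)) *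
        ∏ j ∈ range k, (t ^ 2 + (j + 1) ^ 2) := by
  have hsinh : Real.sinh (π * t) ≠ 0 := Real.sinh_ne_zero.mpr (mul_ne_zero pi_ne_zero ht)
  rw [plancherelDensity, norm_harishChandraC k ht, div_pow, mul_pow, mul_pow, mul_pow,
    norm_prod_I_mul_add_nat_sq, norm_Gamma_I_mul_sq ht,
    norm_Gamma_I_mul_sq (mul_ne_zero two_ne_zero ht), show π * (2 * t) = 2 * (π * t) by ring,
    Real.sinh_two_mul]
  field_simp
  rw [← pow_mul, pow_mul']
  ring

namespace Asymptotics

theorem isTheta_principal_iff_of_nonneg {α : Type*} {f g : α → ℝ} {s : Set α}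
    (hf : ∀ x ∈ s, 0 ≤ f x) (hg : ∀ x ∈ s, 0 ≤ g x) :
    f =Θ[𝓟 s] g ↔
      ∃ C₁ C₂ : ℝ, 0 < C₁ ∧ 0 < C₂ ∧ ∀ x ∈ s, C₁ * g x ≤ f x ∧ f x ≤ C₂ * g x := by
  have hnorm : ∀ x ∈ s, ‖f x‖ = f x ∧ ‖g x‖ = g x := fun x hx =>
    ⟨Real.norm_of_nonneg (hf x hx), Real.norm_of_nonneg (hg x hx)⟩
  constructor
  · rintro ⟨hfg, hgf⟩
    obtain ⟨C₂, hC₂, hfg⟩ := hfg.exists_pos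
    obtain ⟨C, hC, hgf⟩ := hgf.exists_pos
    rw [isBigOWith_principal] at hfg hgf
    refine ⟨C⁻¹, C₂, inv_pos.mpr hC, hC₂, fun x hx => ⟨?_, ?_⟩⟩
    · rw [inv_mul_le_iff₀ hC]
      simpa only [(hnorm x hx).1, (hnorm x hx).2] using hgf x hx
    · simpa only [(hnorm x hx).1, (hnorm x hx).2] using hfg x hx
  · rintro ⟨C₁, C₂, hC₁, -, h⟩
    refine ⟨isBigO_principal.mpr ⟨C₂, fun x hx => ?_⟩, isBigO_principal.mpr ⟨C₁⁻¹, fun x hx => ?_⟩⟩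
    · simpa only [(hnorm x hx).1, (hnorm x hx).2] using (h x hx).2
    · rw [(hnorm x hx).1, (hnorm x hx).2, le_inv_mul_iff₀ hC₁]
      exact (h x hx).1

end Asymptotics

namespace Real

theorem sinh_le_two_mul_mul_cosh {x : ℝ} (hx : 0 ≤ x) : sinh x ≤ 2 * x * cosh x := by
  have hexp := add_one_le_exp (-(2 * x))
  rw [show -(2 * x) = -x + -x by ring, exp_add] at hexp
  have hinv : exp x * exp (-x) = 1 := by rw [← exp_add, add_neg_cancel, exp_zero]
  rw [sinh_eq, cosh_eq]
  nlinarith [exp_pos x, exp_pos (-x)]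

theorem mul_cosh_le_add_mul_sinh (x : ℝ) : x * cosh x ≤ (1 + x) * sinh x := by
  have hexp := add_one_le_exp (2 * x)
  rw [two_mul, exp_add] at hexp
  have hinv : exp x * exp (-x) = 1 := by rw [← exp_add, add_neg_cancel, exp_zero]
  rw [sinh_eq, cosh_eq]
  nlinarith [exp_pos x, exp_pos (-x)]

theorem mul_cosh_div_sinh_mem_Icc {x : ℝ} (hx : 0 < x) :
    x * cosh x / sinh x ∈ Set.Icc ((1 + x) / 4) (1 + x) := by
  have hsinh : 0 < sinh x := sinh_pos_iff.mpr hx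
  rw [Set.mem_Icc, le_div_iff₀ hsinh, div_le_iff₀ hsinh]
  have hlt := sinh_lt_cosh x
  exact ⟨by nlinarith [sinh_le_two_mul_mul_cosh hx.le], mul_cosh_le_add_mul_sinh x⟩

end Real

theorem isTheta_mul_cosh_div_sinh :
    (fun t => t * Real.cosh (π * t) / Real.sinh (π * t)) =Θ[𝓟 {0}ᶜ] fun t => 1 + |t| := by
  have heven (t : ℝ) : t * Real.cosh (π * t) / Real.sinh (π * t) =
      |t| * Real.cosh (π * |t|) / Real.sinh (π * |t|) := by
    rcases abs_choice t with h | h <;> rw [h]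
    rw [mul_neg, Real.cosh_neg, Real.sinh_neg, neg_mul, neg_div_neg_eq]
  rw [isTheta_principal_iff_of_nonneg (fun t _ => ?_) (fun t _ => by positivity)]
  · refine ⟨1 / (4 * π), 1, by positivity, one_pos, fun t ht => ?_⟩
    have hx : 0 < π * |t| := mul_pos pi_pos (abs_pos.mpr ht)
    obtain ⟨hlow, hhigh⟩ := mul_cosh_div_sinh_mem_Icc hx
    have hscale : |t| * Real.cosh (π * |t|) / Real.sinh (π * |t|) =
        π * |t| * Real.cosh (π * |t|) / Real.sinh (π * |t|) / π := by
      field_simp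
    rw [heven, hscale, le_div_iff₀ pi_pos, div_le_iff₀ pi_pos,
      show 1 / (4 * π) * (1 + |t|) * π = (1 + |t|) / 4 by field_simp]
    constructor <;> nlinarith [pi_gt_three, abs_nonneg t]
  · rw [heven]
    exact div_nonneg (by positivity) (Real.sinh_nonneg_iff.mpr (by positivity))

theorem isTheta_sq_add_sq {b : ℝ} (hb : 1 ≤ b) :
    (fun t : ℝ => t ^ 2 + b ^ 2) =Θ[⊤] fun t => (1 + |t|) ^ 2 := by
  rw [← principal_univ, isTheta_principal_iff_of_nonneg (fun t _ => by positivity)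
    (fun t _ => by positivity)]
  refine ⟨1 / 2, b ^ 2, by norm_num, by positivity, fun t _ => ⟨?_, ?_⟩⟩
  · nlinarith [sq_abs t, sq_nonneg (1 - |t|)]
  · nlinarith [sq_abs t, abs_nonneg t, mul_nonneg (abs_nonneg t) (sub_nonneg.mpr hb)]

theorem isTheta_prod_range_sq_add_sq (k : ℕ) :
    (fun t : ℝ => ∏ j ∈ range k, (t ^ 2 + (j + 1) ^ 2)) =Θ[⊤] fun t => (1 + |t|) ^ (2 * k) := by
  have h := IsTheta.finsetProd (s := range k) fun j _ =>
    isTheta_sq_add_sq (b := (j : ℝ) + 1) (by simp)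
  simpa only [prod_const, card_range, ← pow_mul] using h

/-- Strichartz-type estimate for the Plancherel density (n even):
`ν(λ) = (2/π)·|c(λ)|⁻²` with
`c(λ) = 2^(n−2iλ) Γ(n/2) Γ(2iλ) / (Γ(iλ + n/2) Γ(iλ))` satisfies
`ν(λ) ≍ (1+|λ|)^(n−1)` on `ℝ \ {0}`. -/
theorem plancherel_density_asymp_even
    (n : ℕ) (hn : 2 ≤ n) (hne : Even n)
    (c : ℝ → ℂ)
    (hc : ∀ l : ℝ, l ≠ 0 → c l =
      (2 : ℂ) ^ ((n : ℂ) - 2 * Complex.I * (l : ℂ)) * Complex.Gamma ((n : ℂ) / 2) *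
        Complex.Gamma (2 * Complex.I * (l : ℂ)) /
        (Complex.Gamma (Complex.I * (l : ℂ) + (n : ℂ) / 2) * Complex.Gamma (Complex.I * (l : ℂ))))
    (ν : ℝ → ℝ)
    (hν : ∀ l : ℝ, l ≠ 0 → ν l = (2 / Real.pi) * ((‖c l‖) ^ 2)⁻¹) :
    ∃ C₁ C₂ : ℝ, 0 < C₁ ∧ 0 < C₂ ∧ ∀ l : ℝ, l ≠ 0 →
      C₁ * (1 + |l|) ^ (n - 1) ≤ ν l ∧ ν l ≤ C₂ * (1 + |l|) ^ (n - 1) := by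
  obtain ⟨k, rfl⟩ : ∃ k, n = 2 * (k + 1) := by
    obtain ⟨j, hj⟩ := hne
    exact ⟨j - 1, by omega⟩
  have hν_eq : ∀ l ≠ 0, ν l = plancherelDensity (2 * (k + 1)) l := fun l hl => by
    rw [hν l hl, hc l hl, plancherelDensity, harishChandraC]
  refine (isTheta_principal_iff_of_nonneg (s := {0}ᶜ) (fun l hl => ?_)
    (fun l _ => by positivity)).1 ?_
  · rw [hν l hl]
    positivity
  have hformula : ν =ᶠ[𝓟 {0}ᶜ] fun l => 8 / (16 ^ (k + 1) * (k ! : ℝ) ^ 2) *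
      (l * Real.cosh (π * l) / Real.sinh (π * l) * ∏ j ∈ range k, (l ^ 2 + (j + 1) ^ 2)) :=
    eventually_principal.mpr fun l hl => by rw [hν_eq l hl, plancherelDensity_eq k hl, mul_assoc]
  have hpow : (fun l : ℝ => (1 + |l|) ^ (2 * (k + 1) - 1)) =
      fun l => (1 + |l|) * (1 + |l|) ^ (2 * k) := by
    ext l
    rw [show 2 * (k + 1) - 1 = 2 * k + 1 by omega, pow_succ']
  rw [hpow]
  exact hformula.trans_isTheta <| (isTheta_const_mul_left (by positivity)).2 <|
    isTheta_mul_cosh_div_sinh.mul ((isTheta_prod_range_sq_add_sq k).mono le_top)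
end

section
/- Let V be a real normed vector space, let x, y ∈ V with ‖y‖ < ‖x‖, and let t ≥ 0. Set u = (cosh t)·x + (sinh t)·y and v = (sinh t)·x + (cosh t)·y. Then e^t·‖x + y‖ ≤ ‖u‖ + ‖v‖ ≤ e^t·‖x + y‖·(1 + e^{−2t}·(‖x‖ + ‖y‖)/(‖x‖ − ‖y‖)). In particular, the quantity E := log(‖u‖ + ‖v‖) − log ‖x + y‖ − t satisfies 0 ≤ E ≤ e^{−2t}·(‖x‖ + ‖y‖)/(‖x‖ − ‖y‖). -/
open Real

/-!
Writing `cosh t` and `sinh t` through `e^{±t}` gives `u + v = e^t (x + y)` and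
`u, v = (e^t (x + y) ± e^{-t} (x - y)) / 2`. The triangle inequality then traps `‖u‖ + ‖v‖`
between `e^t ‖x + y‖` and `e^t ‖x + y‖ + e^{-t} ‖x - y‖`, and the error term is controlled by
`‖x - y‖ ≤ ‖x‖ + ‖y‖` and `‖x‖ - ‖y‖ ≤ ‖x + y‖`. The logarithmic form follows from
`log (1 + D) ≤ D`.
-/

lemma norm_sub_mul_norm_sub_le {E : Type*} [SeminormedAddCommGroup E] (x y : E) :
    (‖x‖ - ‖y‖) * ‖x - y‖ ≤ ‖x + y‖ * (‖x‖ + ‖y‖) := by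
  have hsub : ‖x - y‖ ≤ ‖x‖ + ‖y‖ := norm_sub_le x y
  have hadd : ‖x‖ - ‖y‖ ≤ ‖x + y‖ := norm_sub_le_norm_add x y
  rcases le_total 0 (‖x‖ - ‖y‖) with h | h
  · exact mul_le_mul hadd hsub (norm_nonneg _) (norm_nonneg _)
  · exact (mul_nonpos_of_nonpos_of_nonneg h (norm_nonneg _)).trans (by positivity)

lemma log_sub_log_mem_Icc_of_le_mul {a s D : ℝ} (ha : 0 < a) (hlow : a ≤ s)
    (hup : s ≤ a * (1 + D)) : 0 ≤ log s - log a ∧ log s - log a ≤ D := by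
  have hD : 0 < 1 + D := pos_of_mul_pos_right (ha.trans_le (hlow.trans hup)) ha.le
  refine ⟨sub_nonneg.2 (log_le_log ha hlow), ?_⟩
  have hlog := log_le_log (ha.trans_le hlow) hup
  rw [log_mul ha.ne' hD.ne'] at hlog
  linarith [log_le_sub_one_of_pos hD]

section HyperbolicRotation

variable {V : Type*} [SeminormedAddCommGroup V] [NormedSpace ℝ V] (x y : V) (t : ℝ)

lemma cosh_smul_add_sinh_smul_add_sinh_smul_add_cosh_smul :
    (cosh t • x + sinh t • y) + (sinh t • x + cosh t • y) = exp t • (x + y) := by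
  rw [← cosh_add_sinh t]
  module

lemma cosh_smul_add_sinh_smul_eq :
    cosh t • x + sinh t • y = (exp t / 2) • (x + y) + (exp (-t) / 2) • (x - y) := by
  rw [cosh_eq, sinh_eq]
  module

lemma sinh_smul_add_cosh_smul_eq :
    sinh t • x + cosh t • y = (exp t / 2) • (x + y) - (exp (-t) / 2) • (x - y) := by
  rw [cosh_eq, sinh_eq]
  module

lemma exp_mul_norm_add_le_norm_add_norm :
    exp t * ‖x + y‖ ≤ ‖cosh t • x + sinh t • y‖ + ‖sinh t • x + cosh t • y‖ := by
  have h := norm_add_le (cosh t • x + sinh t • y) (sinh t • x + cosh t • y)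
  rwa [cosh_smul_add_sinh_smul_add_sinh_smul_add_cosh_smul, norm_smul, norm_of_nonneg
    (exp_pos t).le] at h

lemma norm_add_norm_le_exp_mul_add_exp_neg_mul :
    ‖cosh t • x + sinh t • y‖ + ‖sinh t • x + cosh t • y‖ ≤
      exp t * ‖x + y‖ + exp (-t) * ‖x - y‖ := by
  have hnorm : ∀ c : ℝ, 0 ≤ c → ∀ z : V, ‖c • z‖ = c * ‖z‖ := fun c hc z => by
    rw [norm_smul, norm_of_nonneg hc]
  have hp := (exp_pos t).le
  have hm := (exp_pos (-t)).le
  have hu := norm_add_le ((exp t / 2) • (x + y)) ((exp (-t) / 2) • (x - y))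
  have hv := norm_sub_le ((exp t / 2) • (x + y)) ((exp (-t) / 2) • (x - y))
  rw [hnorm _ (by positivity), hnorm _ (by positivity)] at hu hv
  rw [cosh_smul_add_sinh_smul_eq, sinh_smul_add_cosh_smul_eq]
  linarith

lemma norm_add_norm_le_exp_mul_mul_one_add (hxy : ‖y‖ < ‖x‖) :
    ‖cosh t • x + sinh t • y‖ + ‖sinh t • x + cosh t • y‖ ≤
      exp t * ‖x + y‖ * (1 + exp (-2 * t) * (‖x‖ + ‖y‖) / (‖x‖ - ‖y‖)) := by
  have hN : 0 < ‖x‖ - ‖y‖ := sub_pos.2 hxy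
  have hexp : exp t * exp (-2 * t) = exp (-t) := by rw [← exp_add]; ring_nf
  have herr : exp (-t) * ‖x - y‖ ≤
      exp t * ‖x + y‖ * (exp (-2 * t) * (‖x‖ + ‖y‖) / (‖x‖ - ‖y‖)) := by
    rw [mul_div_assoc', le_div_iff₀ hN]
    calc exp (-t) * ‖x - y‖ * (‖x‖ - ‖y‖)
        = exp (-t) * ((‖x‖ - ‖y‖) * ‖x - y‖) := by ring
      _ ≤ exp (-t) * (‖x + y‖ * (‖x‖ + ‖y‖)) :=
          mul_le_mul_of_nonneg_left (norm_sub_mul_norm_sub_le x y) (exp_pos _).le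
      _ = exp t * ‖x + y‖ * (exp (-2 * t) * (‖x‖ + ‖y‖)) := by rw [← hexp]; ring
  linarith [norm_add_norm_le_exp_mul_add_exp_neg_mul x y t]

end HyperbolicRotation

theorem cartan_iwasawa_estimate_general
    {V : Type*} [NormedAddCommGroup V] [NormedSpace ℝ V]
    (x y : V) (hxy : ‖y‖ < ‖x‖) (t : ℝ)
    (u v : V)
    (hu : u = Real.cosh t • x + Real.sinh t • y)
    (hv : v = Real.sinh t • x + Real.cosh t • y) :
    (Real.exp t * ‖x + y‖ ≤ ‖u‖ + ‖v‖) ∧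
    (‖u‖ + ‖v‖ ≤
      Real.exp t * ‖x + y‖ * (1 + Real.exp (-2 * t) * (‖x‖ + ‖y‖) / (‖x‖ - ‖y‖))) ∧
    (0 ≤ Real.log (‖u‖ + ‖v‖) - Real.log ‖x + y‖ - t) ∧
    (Real.log (‖u‖ + ‖v‖) - Real.log ‖x + y‖ - t ≤
      Real.exp (-2 * t) * (‖x‖ + ‖y‖) / (‖x‖ - ‖y‖)) := by
  subst hu hv
  have hlow := exp_mul_norm_add_le_norm_add_norm x y t
  have hup := norm_add_norm_le_exp_mul_mul_one_add x y t hxy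
  have hxy_pos : 0 < ‖x + y‖ :=
    (sub_pos.2 hxy).trans_le (norm_sub_le_norm_add x y)
  have hlog : log (exp t * ‖x + y‖) = log ‖x + y‖ + t := by
    rw [log_mul (exp_pos t).ne' hxy_pos.ne', log_exp, add_comm]
  obtain ⟨hE₀, hE₁⟩ := log_sub_log_mem_Icc_of_le_mul (by positivity) hlow hup
  rw [hlog, ← sub_sub] at hE₀ hE₁
  exact ⟨hlow, hup, hE₀, hE₁⟩

/-- Cartan vs Iwasawa projection estimate in a real normed space: for
`‖y‖ < ‖x‖`, `t ≥ 0`, `u = cosh t • x + sinh t • y`,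
`v = sinh t • x + cosh t • y`, one has
`e^t·‖x+y‖ ≤ ‖u‖ + ‖v‖ ≤ e^t·‖x+y‖·(1 + e^(−2t)·(‖x‖+‖y‖)/(‖x‖−‖y‖))`, and
`E := log(‖u‖+‖v‖) − log ‖x+y‖ − t` satisfies
`0 ≤ E ≤ e^(−2t)·(‖x‖+‖y‖)/(‖x‖−‖y‖)`. -/
theorem cartan_iwasawa_estimate
    {V : Type*} [NormedAddCommGroup V] [NormedSpace ℝ V]
    (x y : V) (hxy : ‖y‖ < ‖x‖) (t : ℝ) (ht : 0 ≤ t)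
    (u v : V)
    (hu : u = Real.cosh t • x + Real.sinh t • y)
    (hv : v = Real.sinh t • x + Real.cosh t • y) :
    (Real.exp t * ‖x + y‖ ≤ ‖u‖ + ‖v‖) ∧
    (‖u‖ + ‖v‖ ≤
      Real.exp t * ‖x + y‖ * (1 + Real.exp (-2 * t) * (‖x‖ + ‖y‖) / (‖x‖ - ‖y‖))) ∧
    (0 ≤ Real.log (‖u‖ + ‖v‖) - Real.log ‖x + y‖ - t) ∧
    (Real.log (‖u‖ + ‖v‖) - Real.log ‖x + y‖ - t ≤
      Real.exp (-2 * t) * (‖x‖ + ‖y‖) / (‖x‖ - ‖y‖)) :=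
  cartan_iwasawa_estimate_general x y hxy t u v hu hv
end
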